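/- arXiv:2010.12636 — 5 statements merged into one kernel-verified Lean document; each statement's English description precedes it below -/
import Mathlib

section
/- Let H : ℝ^n × ℝ^n → ℝ be a smooth function and δ ∈ ℝ. Define φ₁(q,p,x,y) = (q, p - δ·∂H/∂q(q,y), x + δ·∂H/∂p(q,y), y), where ∂H/∂q and ∂H/∂p denote the partial gradients with respect to the first and second argument. Then φ₁ preserves the symplectic two-form dq∧dp + dx∧dy on ℝ^{4n}, i.e., the Jacobian Dφ₁ satisfies (Dφ₁)ᵀ J (Dφ₁) = J where J is the standard symplectic matrix on ℝ^{4n} pairing (q,p) and (x,y). -/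
open Matrix

/-- Partial gradient of `H` with respect to its first (position) argument. -/
noncomputable def gradQ {n : ℕ} (H : (Fin n → ℝ) × (Fin n → ℝ) → ℝ)
    (z : (Fin n → ℝ) × (Fin n → ℝ)) : Fin n → ℝ :=
  fun i => fderiv ℝ H z (Pi.single i 1, 0)

/-- Partial gradient of `H` with respect to its second (momentum) argument. -/
noncomputable def gradP {n : ℕ} (H : (Fin n → ℝ) × (Fin n → ℝ) → ℝ)
    (z : (Fin n → ℝ) × (Fin n → ℝ)) : Fin n → ℝ :=
  fun i => fderiv ℝ H z (0, Pi.single i 1)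

/-- The symplectic two-form `dq∧dp + dx∧dy` on `ℝ^{4n}`, as a bilinear pairing. -/
def omega4 {n : ℕ}
    (u v : (Fin n → ℝ) × (Fin n → ℝ) × (Fin n → ℝ) × (Fin n → ℝ)) : ℝ :=
  u.1 ⬝ᵥ v.2.1 - u.2.1 ⬝ᵥ v.1 + u.2.2.1 ⬝ᵥ v.2.2.2 - u.2.2.2 ⬝ᵥ v.2.2.1

section Aux

variable {n : ℕ}

local notation "Av" => (Fin n → ℝ)
local notation "Ev" => ((Fin n → ℝ) × (Fin n → ℝ))
local notation "Fv" => ((Fin n → ℝ) × (Fin n → ℝ) × (Fin n → ℝ) × (Fin n → ℝ))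

/-- dot with values of a CLM at basis vectors -/
lemma dot_clm (T : (Fin n → ℝ) →L[ℝ] ℝ) (a : Fin n → ℝ) :
    a ⬝ᵥ (fun i => T (Pi.single i 1)) = T a := by
  have h : a = ∑ i, a i • (Pi.single i 1 : Fin n → ℝ) := by
    simp_rw [← Pi.single_smul, smul_eq_mul, mul_one, Finset.univ_sum_single]
  conv_rhs => rw [h]
  rw [map_sum]
  simp [dotProduct, _root_.map_smul, smul_eq_mul]

/-- The projection quadruple → (first, fourth). -/
noncomputable def ρ4 : Fv →L[ℝ] Ev :=
  (ContinuousLinearMap.fst ℝ Av (Av × Av × Av)).prod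
    ((ContinuousLinearMap.snd ℝ Av Av).comp
      ((ContinuousLinearMap.snd ℝ Av (Av × Av)).comp (ContinuousLinearMap.snd ℝ Av (Av × Av × Av))))

noncomputable def piQ : (Ev →L[ℝ] ℝ) →L[ℝ] Av :=
  ContinuousLinearMap.pi (fun i => ContinuousLinearMap.apply ℝ ℝ ((Pi.single i 1 : Av), (0 : Av)))

noncomputable def piP : (Ev →L[ℝ] ℝ) →L[ℝ] Av :=
  ContinuousLinearMap.pi (fun i => ContinuousLinearMap.apply ℝ ℝ ((0 : Av), (Pi.single i 1 : Av)))

end Aux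

theorem phi1_symplectic {n : ℕ} (H : (Fin n → ℝ) × (Fin n → ℝ) → ℝ)
    (hH : ContDiff ℝ (⊤ : ℕ∞) H) (δ : ℝ)
    (φ₁ : (Fin n → ℝ) × (Fin n → ℝ) × (Fin n → ℝ) × (Fin n → ℝ) →
      (Fin n → ℝ) × (Fin n → ℝ) × (Fin n → ℝ) × (Fin n → ℝ))
    (hφ₁ : ∀ q p x y, φ₁ (q, p, x, y) =
      (q, p - δ • gradQ H (q, y), x + δ • gradP H (q, y), y)) :
    ∀ z u v, omega4 (fderiv ℝ φ₁ z u) (fderiv ℝ φ₁ z v) = omega4 u v := by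
  intro z u v
  have hDdiff : Differentiable ℝ (fderiv ℝ H) :=
    (hH.fderiv_right (m := 1) (by exact WithTop.coe_le_coe.mpr le_top)).differentiable one_ne_zero
  set w₀ : (Fin n → ℝ) × (Fin n → ℝ) := (z.1, z.2.2.2) with hw₀
  set B := fderiv ℝ (fderiv ℝ H) w₀ with hB
  have hDd : HasFDerivAt (fderiv ℝ H) B w₀ := (hDdiff w₀).hasFDerivAt
  have hgQ : HasFDerivAt (gradQ H) (piQ.comp B) w₀ := by
    have h : gradQ H = piQ ∘ (fderiv ℝ H) := by funext w; rfl
    rw [h]; exact piQ.hasFDerivAt.comp w₀ hDd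
  have hgP : HasFDerivAt (gradP H) (piP.comp B) w₀ := by
    have h : gradP H = piP ∘ (fderiv ℝ H) := by funext w; rfl
    rw [h]; exact piP.hasFDerivAt.comp w₀ hDd
  have hφ : φ₁ = fun w : (Fin n → ℝ) × (Fin n → ℝ) × (Fin n → ℝ) × (Fin n → ℝ) =>
      (w.1, w.2.1 - δ • gradQ H (ρ4 w), w.2.2.1 + δ • gradP H (ρ4 w), w.2.2.2) := by
    funext w
    obtain ⟨q, p, x, y⟩ := w
    exact hφ₁ q p x y
  set π1 := ContinuousLinearMap.fst ℝ (Fin n → ℝ) ((Fin n → ℝ) × (Fin n → ℝ) × (Fin n → ℝ)) with hπ1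
  set π2 := (ContinuousLinearMap.fst ℝ (Fin n → ℝ) ((Fin n → ℝ) × (Fin n → ℝ))).comp
    (ContinuousLinearMap.snd ℝ (Fin n → ℝ) ((Fin n → ℝ) × (Fin n → ℝ) × (Fin n → ℝ))) with hπ2
  set π3 := (ContinuousLinearMap.fst ℝ (Fin n → ℝ) (Fin n → ℝ)).comp
    ((ContinuousLinearMap.snd ℝ (Fin n → ℝ) ((Fin n → ℝ) × (Fin n → ℝ))).comp
      (ContinuousLinearMap.snd ℝ (Fin n → ℝ) ((Fin n → ℝ) × (Fin n → ℝ) × (Fin n → ℝ)))) with hπ3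
  set π4 := (ContinuousLinearMap.snd ℝ (Fin n → ℝ) (Fin n → ℝ)).comp
    ((ContinuousLinearMap.snd ℝ (Fin n → ℝ) ((Fin n → ℝ) × (Fin n → ℝ))).comp
      (ContinuousLinearMap.snd ℝ (Fin n → ℝ) ((Fin n → ℝ) × (Fin n → ℝ) × (Fin n → ℝ)))) with hπ4
  have hgQz : HasFDerivAt (fun w => gradQ H (ρ4 w)) ((piQ.comp B).comp ρ4) z := by
    have := HasFDerivAt.comp (x := z)
      (show HasFDerivAt (gradQ H) (piQ.comp B) (ρ4 z) from hgQ) ρ4.hasFDerivAt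
    simpa [Function.comp] using this
  have hgPz : HasFDerivAt (fun w => gradP H (ρ4 w)) ((piP.comp B).comp ρ4) z := by
    have := HasFDerivAt.comp (x := z)
      (show HasFDerivAt (gradP H) (piP.comp B) (ρ4 z) from hgP) ρ4.hasFDerivAt
    simpa [Function.comp] using this
  have h2 : HasFDerivAt (fun w : (Fin n → ℝ) × (Fin n → ℝ) × (Fin n → ℝ) × (Fin n → ℝ) =>
      w.2.1 - δ • gradQ H (ρ4 w)) (π2 - δ • ((piQ.comp B).comp ρ4)) z :=
    (π2.hasFDerivAt).sub (hgQz.const_smul δ)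
  have h3 : HasFDerivAt (fun w : (Fin n → ℝ) × (Fin n → ℝ) × (Fin n → ℝ) × (Fin n → ℝ) =>
      w.2.2.1 + δ • gradP H (ρ4 w)) (π3 + δ • ((piP.comp B).comp ρ4)) z :=
    (π3.hasFDerivAt).add (hgPz.const_smul δ)
  have hΦ : HasFDerivAt φ₁
      (π1.prod ((π2 - δ • ((piQ.comp B).comp ρ4)).prod
        ((π3 + δ • ((piP.comp B).comp ρ4)).prod π4))) z := by
    rw [hφ]
    exact (π1.hasFDerivAt).prodMk (h2.prodMk (h3.prodMk (π4.hasFDerivAt)))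
  rw [hΦ.fderiv]
  have hsymm : IsSymmSndFDerivAt ℝ H w₀ :=
    (hH.contDiffAt).isSymmSndFDerivAt (by norm_num; exact WithTop.coe_le_coe.mpr le_top)
  have hBsymm : ∀ a b : (Fin n → ℝ) × (Fin n → ℝ), B a b = B b a := fun a b => hsymm a b
  obtain ⟨ua, ub, uc, ud⟩ := u
  obtain ⟨va, vb, vc, vd⟩ := v
  have e1 : ∀ (c : (Fin n → ℝ) × (Fin n → ℝ)) (a : Fin n → ℝ),
      a ⬝ᵥ (piQ (B c)) = B c (a, 0) := by
    intro c a
    have h : (piQ (B c) : Fin n → ℝ)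
        = fun i => ((B c).comp (ContinuousLinearMap.inl ℝ (Fin n → ℝ) (Fin n → ℝ))) (Pi.single i 1) := by
      funext i; rfl
    rw [h, dot_clm]; rfl
  have e2 : ∀ (c : (Fin n → ℝ) × (Fin n → ℝ)) (d : Fin n → ℝ),
      d ⬝ᵥ (piP (B c)) = B c (0, d) := by
    intro c d
    have h : (piP (B c) : Fin n → ℝ)
        = fun i => ((B c).comp (ContinuousLinearMap.inr ℝ (Fin n → ℝ) (Fin n → ℝ))) (Pi.single i 1) := by
      funext i; rfl
    rw [h, dot_clm]; rfl
  have key :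
      -(ua ⬝ᵥ (piQ (B (va, vd)))) + (piQ (B (ua, ud))) ⬝ᵥ va
        + (piP (B (ua, ud))) ⬝ᵥ vd - ud ⬝ᵥ (piP (B (va, vd))) = 0 := by
    rw [dotProduct_comm (piQ (B (ua,ud))) va, dotProduct_comm (piP (B (ua,ud))) vd]
    rw [e1, e1, e2, e2]
    have hsum : ∀ (c : (Fin n → ℝ) × (Fin n → ℝ)) (a d : Fin n → ℝ),
        B c (a, 0) + B c (0, d) = B c (a, d) := by
      intro c a d
      rw [← map_add]
      norm_num
    have h5 : B (ua, ud) (va, 0) + B (ua, ud) (0, vd)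
        = B (va, vd) (ua, 0) + B (va, vd) (0, ud) := by
      rw [hsum, hsum, hBsymm]
    linarith
  have hρu : (ρ4 (ua, ub, uc, ud) : (Fin n → ℝ) × (Fin n → ℝ)) = (ua, ud) := rfl
  have hρv : (ρ4 (va, vb, vc, vd) : (Fin n → ℝ) × (Fin n → ℝ)) = (va, vd) := rfl
  simp only [omega4, ContinuousLinearMap.prod_apply, ContinuousLinearMap.sub_apply,
    ContinuousLinearMap.add_apply, ContinuousLinearMap.smul_apply, ContinuousLinearMap.comp_apply,
    hρu, hρv, hπ1, hπ2, hπ3, hπ4, ContinuousLinearMap.coe_fst', ContinuousLinearMap.coe_snd']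
  simp only [dotProduct_sub, sub_dotProduct, dotProduct_add,
    add_dotProduct, dotProduct_smul, smul_dotProduct, smul_eq_mul]
  linear_combination δ * key
end

section
/- Let H : ℝ^n × ℝ^n → ℝ be a smooth function and δ ∈ ℝ. Define φ₂(q,p,x,y) = (q + δ·∂H/∂p(x,p), p, x, y - δ·∂H/∂q(x,p)). Then φ₂ preserves the symplectic two-form dq∧dp + dx∧dy on ℝ^{4n}. -/
open Matrix

section helpers

lemma pair_sum_right {n : ℕ} (a : Fin n → ℝ) :
    ((0, a) : (Fin n → ℝ) × (Fin n → ℝ)) =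
      ∑ i, a i • (((0 : Fin n → ℝ), (Pi.single i 1 : Fin n → ℝ))) := by
  apply Prod.ext
  · simp [Prod.fst_sum]
  · simp only [Prod.snd_sum, Prod.smul_mk, smul_zero, ← Pi.single_smul, smul_eq_mul, mul_one,
      Finset.univ_sum_single]

lemma dot_single_right {n : ℕ} (L : ((Fin n → ℝ) × (Fin n → ℝ)) →L[ℝ] ℝ) (a : Fin n → ℝ) :
    (fun i => L (0, (Pi.single i 1 : Fin n → ℝ))) ⬝ᵥ a = L (0, a) := by
  rw [pair_sum_right, map_sum]
  simp only [dotProduct]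
  refine Finset.sum_congr rfl fun i _ => ?_
  rw [_root_.map_smul, smul_eq_mul, mul_comm]

lemma dot_single_right' {n : ℕ} (L : ((Fin n → ℝ) × (Fin n → ℝ)) →L[ℝ] ℝ) (a : Fin n → ℝ) :
    a ⬝ᵥ (fun i => L (0, (Pi.single i 1 : Fin n → ℝ))) = L (0, a) := by
  rw [dotProduct_comm, dot_single_right]

lemma pair_sum_left {n : ℕ} (a : Fin n → ℝ) :
    ((a, 0) : (Fin n → ℝ) × (Fin n → ℝ)) =
      ∑ i, a i • ((((Pi.single i 1 : Fin n → ℝ)), (0 : Fin n → ℝ))) := by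
  apply Prod.ext
  · simp only [Prod.fst_sum, Prod.smul_mk, smul_zero, ← Pi.single_smul, smul_eq_mul, mul_one,
      Finset.univ_sum_single]
  · simp [Prod.snd_sum]

lemma dot_single_left {n : ℕ} (L : ((Fin n → ℝ) × (Fin n → ℝ)) →L[ℝ] ℝ) (a : Fin n → ℝ) :
    (fun i => L ((Pi.single i 1 : Fin n → ℝ), 0)) ⬝ᵥ a = L (a, 0) := by
  rw [pair_sum_left, map_sum]
  simp only [dotProduct]
  refine Finset.sum_congr rfl fun i _ => ?_
  rw [_root_.map_smul, smul_eq_mul, mul_comm]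

lemma dot_single_left' {n : ℕ} (L : ((Fin n → ℝ) × (Fin n → ℝ)) →L[ℝ] ℝ) (a : Fin n → ℝ) :
    a ⬝ᵥ (fun i => L ((Pi.single i 1 : Fin n → ℝ), 0)) = L (a, 0) := by
  rw [dotProduct_comm, dot_single_left]

/-- Derivative of `gradP`. -/
lemma hasFDerivAt_gradP {n : ℕ} (H : (Fin n → ℝ) × (Fin n → ℝ) → ℝ)
    (hH : ContDiff ℝ (⊤ : ℕ∞) H) (z' : (Fin n → ℝ) × (Fin n → ℝ)) :
    HasFDerivAt (gradP H)
      (ContinuousLinearMap.pi fun i =>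
        (fderiv ℝ (fderiv ℝ H) z').flip (0, (Pi.single i 1 : Fin n → ℝ))) z' := by
  have hFd : Differentiable ℝ (fderiv ℝ H) :=
    (hH.fderiv_right (m := 1) (by exact WithTop.coe_le_coe.mpr le_top)).differentiable one_ne_zero
  rw [hasFDerivAt_pi']
  intro i
  have h2 := (ContinuousLinearMap.apply ℝ ℝ
      (((0 : Fin n → ℝ), (Pi.single i 1 : Fin n → ℝ)))).hasFDerivAt.comp z'
      ((hFd z').hasFDerivAt)
  have hclm : (ContinuousLinearMap.proj i).comp
      (ContinuousLinearMap.pi fun i =>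
        (fderiv ℝ (fderiv ℝ H) z').flip (0, (Pi.single i 1 : Fin n → ℝ)))
      = (ContinuousLinearMap.apply ℝ ℝ
          (((0 : Fin n → ℝ), (Pi.single i 1 : Fin n → ℝ)))).comp
        (fderiv ℝ (fderiv ℝ H) z') := by
    apply ContinuousLinearMap.ext
    intro w
    simp
  rw [hclm]
  exact h2

/-- Derivative of `gradQ`. -/
lemma hasFDerivAt_gradQ {n : ℕ} (H : (Fin n → ℝ) × (Fin n → ℝ) → ℝ)
    (hH : ContDiff ℝ (⊤ : ℕ∞) H) (z' : (Fin n → ℝ) × (Fin n → ℝ)) :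
    HasFDerivAt (gradQ H)
      (ContinuousLinearMap.pi fun i =>
        (fderiv ℝ (fderiv ℝ H) z').flip ((Pi.single i 1 : Fin n → ℝ), 0)) z' := by
  have hFd : Differentiable ℝ (fderiv ℝ H) :=
    (hH.fderiv_right (m := 1) (by exact WithTop.coe_le_coe.mpr le_top)).differentiable one_ne_zero
  rw [hasFDerivAt_pi']
  intro i
  have h2 := (ContinuousLinearMap.apply ℝ ℝ
      (((Pi.single i 1 : Fin n → ℝ), (0 : Fin n → ℝ)))).hasFDerivAt.comp z'
      ((hFd z').hasFDerivAt)
  have hclm : (ContinuousLinearMap.proj i).comp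
      (ContinuousLinearMap.pi fun i =>
        (fderiv ℝ (fderiv ℝ H) z').flip ((Pi.single i 1 : Fin n → ℝ), 0))
      = (ContinuousLinearMap.apply ℝ ℝ
          (((Pi.single i 1 : Fin n → ℝ), (0 : Fin n → ℝ)))).comp
        (fderiv ℝ (fderiv ℝ H) z') := by
    apply ContinuousLinearMap.ext
    intro w
    simp
  rw [hclm]
  exact h2

end helpers

theorem phi2_symplectic {n : ℕ} (H : (Fin n → ℝ) × (Fin n → ℝ) → ℝ)
    (hH : ContDiff ℝ (⊤ : ℕ∞) H) (δ : ℝ)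
    (φ₂ : (Fin n → ℝ) × (Fin n → ℝ) × (Fin n → ℝ) × (Fin n → ℝ) →
      (Fin n → ℝ) × (Fin n → ℝ) × (Fin n → ℝ) × (Fin n → ℝ))
    (hφ₂ : ∀ q p x y, φ₂ (q, p, x, y) =
      (q + δ • gradP H (x, p), p, x, y - δ • gradQ H (x, p))) :
    ∀ z u v, omega4 (fderiv ℝ φ₂ z u) (fderiv ℝ φ₂ z v) = omega4 u v := by
  have hφ : φ₂ = fun w => (w.1 + δ • gradP H (w.2.2.1, w.2.1), w.2.1, w.2.2.1,
      w.2.2.2 - δ • gradQ H (w.2.2.1, w.2.1)) := by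
    funext w
    obtain ⟨q, p, x, y⟩ := w
    exact hφ₂ q p x y
  subst hφ
  intro z u v
  have hHd : Differentiable ℝ H := hH.differentiable (by simp)
  have hFd : Differentiable ℝ (fderiv ℝ H) :=
    (hH.fderiv_right (m := 1) (by exact WithTop.coe_le_coe.mpr le_top)).differentiable one_ne_zero
  have hsymm : ∀ z' a b, fderiv ℝ (fderiv ℝ H) z' a b = fderiv ℝ (fderiv ℝ H) z' b a :=
    fun z' a b =>
      second_derivative_symmetric (fun y => (hHd y).hasFDerivAt) ((hFd z').hasFDerivAt) a b
  -- projections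
  have hsnd : HasFDerivAt (Prod.snd)
      (ContinuousLinearMap.snd ℝ (Fin n → ℝ) ((Fin n → ℝ) × (Fin n → ℝ) × (Fin n → ℝ))) z :=
    hasFDerivAt_snd
  have hfst : HasFDerivAt (Prod.fst)
      (ContinuousLinearMap.fst ℝ (Fin n → ℝ) ((Fin n → ℝ) × (Fin n → ℝ) × (Fin n → ℝ))) z :=
    hasFDerivAt_fst
  have hS := HasFDerivAt.prodMk (hsnd.snd.fst) hsnd.fst
  have hgP := (hasFDerivAt_gradP H hH (z.2.2.1, z.2.1)).comp z hS
  have hgQ := (hasFDerivAt_gradQ H hH (z.2.2.1, z.2.1)).comp z hS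
  have hDφ := (hfst.add (hgP.const_smul δ)).prodMk
    (HasFDerivAt.prodMk (hsnd.fst) (HasFDerivAt.prodMk (hsnd.snd.fst) (HasFDerivAt.sub (hsnd.snd.snd) (hgQ.const_smul δ))))
  have hfd : fderiv ℝ (fun w : (Fin n → ℝ) × (Fin n → ℝ) × (Fin n → ℝ) × (Fin n → ℝ) =>
      (w.1 + δ • gradP H (w.2.2.1, w.2.1), w.2.1, w.2.2.1,
        w.2.2.2 - δ • gradQ H (w.2.2.1, w.2.1))) z = _ := hDφ.fderiv
  rw [hfd]
  have hP : ∀ (z' U : (Fin n → ℝ) × (Fin n → ℝ)),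
      (ContinuousLinearMap.pi fun i =>
        (fderiv ℝ (fderiv ℝ H) z').flip (0, (Pi.single i 1 : Fin n → ℝ))) U
      = fun i => fderiv ℝ (fderiv ℝ H) z' U (0, (Pi.single i 1 : Fin n → ℝ)) := by
    intro z' U
    funext i
    simp
  have hQ : ∀ (z' U : (Fin n → ℝ) × (Fin n → ℝ)),
      (ContinuousLinearMap.pi fun i =>
        (fderiv ℝ (fderiv ℝ H) z').flip ((Pi.single i 1 : Fin n → ℝ), 0)) U
      = fun i => fderiv ℝ (fderiv ℝ H) z' U ((Pi.single i 1 : Fin n → ℝ), 0) := by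
    intro z' U
    funext i
    simp
  simp only [omega4, ContinuousLinearMap.prod_apply, ContinuousLinearMap.add_apply,
    ContinuousLinearMap.sub_apply, ContinuousLinearMap.smul_apply,
    ContinuousLinearMap.comp_apply, ContinuousLinearMap.coe_fst',
    ContinuousLinearMap.coe_snd', hP, hQ]
  simp only [add_dotProduct, dotProduct_add, sub_dotProduct, dotProduct_sub,
    smul_dotProduct, dotProduct_smul, smul_eq_mul, dot_single_right, dot_single_right',
    dot_single_left, dot_single_left']
  have e1 : fderiv ℝ (fderiv ℝ H) (z.2.2.1, z.2.1) (u.2.2.1, u.2.1) (v.2.2.1, 0)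
      + fderiv ℝ (fderiv ℝ H) (z.2.2.1, z.2.1) (u.2.2.1, u.2.1) (0, v.2.1)
      = fderiv ℝ (fderiv ℝ H) (z.2.2.1, z.2.1) (u.2.2.1, u.2.1) (v.2.2.1, v.2.1) := by
    rw [← map_add]
    simp
  have e2 : fderiv ℝ (fderiv ℝ H) (z.2.2.1, z.2.1) (v.2.2.1, v.2.1) (u.2.2.1, 0)
      + fderiv ℝ (fderiv ℝ H) (z.2.2.1, z.2.1) (v.2.2.1, v.2.1) (0, u.2.1)
      = fderiv ℝ (fderiv ℝ H) (z.2.2.1, z.2.1) (v.2.2.1, v.2.1) (u.2.2.1, u.2.1) := by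
    rw [← map_add]
    simp
  have e3 := hsymm (z.2.2.1, z.2.1) (u.2.2.1, u.2.1) (v.2.2.1, v.2.1)
  linear_combination δ * e1 - δ * e2 + δ * e3
end

section
/- Let ω > 0, δ ∈ ℝ, and let R(δ) be the 2n×2n block matrix [[cos(2ωδ)I, sin(2ωδ)I],[-sin(2ωδ)I, cos(2ωδ)I]]. Define φ₃(q,p,x,y) = ½((q+x, p+y) + R(δ)(q−x, p−y), (q+x, p+y) − R(δ)(q−x, p−y)). Then φ₃ is a linear symplectomorphism of ℝ^{4n} with respect to the form dq∧dp + dx∧dy. -/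
open Matrix

/-- The block rotation `R(δ)` on `ℝ^{2n}`, with blocks
`[[cos(2ωδ)I, sin(2ωδ)I],[-sin(2ωδ)I, cos(2ωδ)I]]`. -/
noncomputable def Rrot {n : ℕ} (ω δ : ℝ) (ab : (Fin n → ℝ) × (Fin n → ℝ)) :
    (Fin n → ℝ) × (Fin n → ℝ) :=
  (Real.cos (2 * ω * δ) • ab.1 + Real.sin (2 * ω * δ) • ab.2,
   -Real.sin (2 * ω * δ) • ab.1 + Real.cos (2 * ω * δ) • ab.2)

theorem phi3_linear_symplectic {n : ℕ} (ω : ℝ) (hω : 0 < ω) (δ : ℝ)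
    (φ₃ : (Fin n → ℝ) × (Fin n → ℝ) × (Fin n → ℝ) × (Fin n → ℝ) →
      (Fin n → ℝ) × (Fin n → ℝ) × (Fin n → ℝ) × (Fin n → ℝ))
    (hφ₃ : ∀ q p x y, φ₃ (q, p, x, y) =
      ((1 / 2 : ℝ) • ((q + x) + (Rrot ω δ (q - x, p - y)).1),
       (1 / 2 : ℝ) • ((p + y) + (Rrot ω δ (q - x, p - y)).2),
       (1 / 2 : ℝ) • ((q + x) - (Rrot ω δ (q - x, p - y)).1),
       (1 / 2 : ℝ) • ((p + y) - (Rrot ω δ (q - x, p - y)).2))) :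
    IsLinearMap ℝ φ₃ ∧ ∀ u v, omega4 (φ₃ u) (φ₃ v) = omega4 u v := by
  have hcs : Real.cos (2 * ω * δ) ^ 2 + Real.sin (2 * ω * δ) ^ 2 = 1 := by
    rw [add_comm]; exact Real.sin_sq_add_cos_sq _
  set c := Real.cos (2 * ω * δ) with hc
  set s := Real.sin (2 * ω * δ) with hs
  constructor
  · constructor
    · rintro ⟨q, p, x, y⟩ ⟨q', p', x', y'⟩
      show φ₃ (q + q', p + p', x + x', y + y') = _
      simp only [hφ₃, Rrot, Prod.mk_add_mk, Prod.mk.injEq]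
      refine ⟨?_, ?_, ?_, ?_⟩ <;> module
    · rintro a ⟨q, p, x, y⟩
      show φ₃ (a • q, a • p, a • x, a • y) = _
      simp only [hφ₃, Rrot, Prod.smul_mk, Prod.mk.injEq]
      refine ⟨?_, ?_, ?_, ?_⟩ <;> module
  · rintro ⟨q, p, x, y⟩ ⟨q', p', x', y'⟩
    simp only [hφ₃, Rrot, omega4]
    simp only [dotProduct_add, add_dotProduct, dotProduct_sub, sub_dotProduct,
      smul_dotProduct, dotProduct_smul, smul_eq_mul, neg_smul, neg_dotProduct,
      dotProduct_neg]
    linear_combination ((1/2:ℝ)*(q ⬝ᵥ p' - x ⬝ᵥ p' - q ⬝ᵥ y' + x ⬝ᵥ y' - p ⬝ᵥ q' + y ⬝ᵥ q' + p ⬝ᵥ x' - y ⬝ᵥ x')) * hcs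
end

section
/- Let H̄(q,p,x,y) = H(q,y) + H(x,p) + (ω/2)(‖q−x‖² + ‖p−y‖²) with H : ℝ^n × ℝ^n → ℝ being C¹. If H has a locally Lipschitz gradient, then the solution of the augmented Hamilton system with initial data (q₀, p₀, q₀, p₀) satisfies x(t) = q(t) and y(t) = p(t) for all t in its interval of existence. -/
open Set

section helpers
variable {α : Type*} [PseudoEMetricSpace α] {E : Type*} [SeminormedAddCommGroup E]

lemma locallyLipschitz_add' {f g : α → E} (hf : LocallyLipschitz f) (hg : LocallyLipschitz g) :
    LocallyLipschitz fun x => f x + g x := by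
  have h2 : LipschitzWith 2 (fun p : E × E => p.1 + p.2) := by
    apply LipschitzWith.of_dist_le_mul
    intro p q
    calc dist (p.1 + p.2) (q.1 + q.2) ≤ dist p.1 q.1 + dist p.2 q.2 := dist_add_add_le _ _ _ _
      _ ≤ dist p q + dist p q := add_le_add (le_max_left _ _) (le_max_right _ _)
      _ = 2 * dist p q := by ring
  exact h2.locallyLipschitz.comp (hf.prodMk hg)

lemma locallyLipschitz_neg' {f : α → E} (hf : LocallyLipschitz f) :
    LocallyLipschitz fun x => -f x := by
  have : LipschitzWith 1 (fun v : E => -v) := by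
    apply LipschitzWith.of_dist_le_mul
    intro p q
    rw [dist_neg_neg]; simp
  exact this.locallyLipschitz.comp hf

lemma locallyLipschitz_sub' {f g : α → E} (hf : LocallyLipschitz f) (hg : LocallyLipschitz g) :
    LocallyLipschitz fun x => f x - g x := by
  simpa [sub_eq_add_neg] using locallyLipschitz_add' hf (locallyLipschitz_neg' hg)

lemma locallyLipschitz_smul' {𝕜 : Type*} [NormedField 𝕜] [NormedSpace 𝕜 E] (c : 𝕜)
    {f : α → E} (hf : LocallyLipschitz f) :
    LocallyLipschitz fun x => c • f x :=
  (lipschitzWith_smul c).locallyLipschitz.comp hf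

lemma locallyLipschitz_fst' {β γ : Type*} [PseudoEMetricSpace β] [PseudoEMetricSpace γ]
    {f : α → β × γ} (hf : LocallyLipschitz f) : LocallyLipschitz fun x => (f x).1 :=
  LipschitzWith.prod_fst.locallyLipschitz.comp hf

lemma locallyLipschitz_snd' {β γ : Type*} [PseudoEMetricSpace β] [PseudoEMetricSpace γ]
    {f : α → β × γ} (hf : LocallyLipschitz f) : LocallyLipschitz fun x => (f x).2 :=
  LipschitzWith.prod_snd.locallyLipschitz.comp hf
end helpers

theorem augmented_stays_diagonal {n : ℕ}
    (H : (Fin n → ℝ) × (Fin n → ℝ) → ℝ) (hH : ContDiff ℝ 1 H)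
    (hLip : LocallyLipschitz fun z : (Fin n → ℝ) × (Fin n → ℝ) =>
      (gradQ H z, gradP H z))
    (ω : ℝ) (a b t₀ : ℝ) (ht₀ : t₀ ∈ Set.Ioo a b)
    (q p x y : ℝ → Fin n → ℝ) (q₀ p₀ : Fin n → ℝ)
    (hq : ∀ t ∈ Set.Ioo a b,
      HasDerivAt q (gradP H (x t, p t) + ω • (p t - y t)) t)
    (hp : ∀ t ∈ Set.Ioo a b,
      HasDerivAt p (-gradQ H (q t, y t) - ω • (q t - x t)) t)
    (hx : ∀ t ∈ Set.Ioo a b,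
      HasDerivAt x (gradP H (q t, y t) - ω • (p t - y t)) t)
    (hy : ∀ t ∈ Set.Ioo a b,
      HasDerivAt y (-gradQ H (x t, p t) + ω • (q t - x t)) t)
    (hq0 : q t₀ = q₀) (hp0 : p t₀ = p₀) (hx0 : x t₀ = q₀) (hy0 : y t₀ = p₀) :
    ∀ t ∈ Set.Ioo a b, x t = q t ∧ y t = p t := by
  classical
  set W := ((Fin n → ℝ) × (Fin n → ℝ)) × ((Fin n → ℝ) × (Fin n → ℝ)) with hW
  set F : W → W := fun w =>
    ((gradP H (w.2.1, w.1.2) + ω • (w.1.2 - w.2.2),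
      -gradQ H (w.1.1, w.2.2) - ω • (w.1.1 - w.2.1)),
     (gradP H (w.1.1, w.2.2) - ω • (w.1.2 - w.2.2),
      -gradQ H (w.2.1, w.1.2) + ω • (w.1.1 - w.2.1))) with hF
  -- F is locally Lipschitz
  have hid : LocallyLipschitz (id : W → W) := LocallyLipschitz.id
  have hπ1 : LocallyLipschitz fun w : W => (w.2.1, w.1.2) :=
    (locallyLipschitz_fst' (locallyLipschitz_snd' hid)).prodMk
      (locallyLipschitz_snd' (locallyLipschitz_fst' hid))
  have hπ2 : LocallyLipschitz fun w : W => (w.1.1, w.2.2) :=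
    (locallyLipschitz_fst' (locallyLipschitz_fst' hid)).prodMk
      (locallyLipschitz_snd' (locallyLipschitz_snd' hid))
  have hG1 : LocallyLipschitz fun w : W => (gradQ H (w.2.1, w.1.2), gradP H (w.2.1, w.1.2)) :=
    hLip.comp hπ1
  have hG2 : LocallyLipschitz fun w : W => (gradQ H (w.1.1, w.2.2), gradP H (w.1.1, w.2.2)) :=
    hLip.comp hπ2
  have hL1 : LocallyLipschitz fun w : W => ω • (w.1.2 - w.2.2) :=
    locallyLipschitz_smul' ω (locallyLipschitz_sub'
      (locallyLipschitz_snd' (locallyLipschitz_fst' hid))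
      (locallyLipschitz_snd' (locallyLipschitz_snd' hid)))
  have hL2 : LocallyLipschitz fun w : W => ω • (w.1.1 - w.2.1) :=
    locallyLipschitz_smul' ω (locallyLipschitz_sub'
      (locallyLipschitz_fst' (locallyLipschitz_fst' hid))
      (locallyLipschitz_fst' (locallyLipschitz_snd' hid)))
  have hFl : LocallyLipschitz F :=
    ((locallyLipschitz_add' (locallyLipschitz_snd' hG1) hL1).prodMk
      (locallyLipschitz_sub' (locallyLipschitz_neg' (locallyLipschitz_fst' hG2)) hL2)).prodMk
    ((locallyLipschitz_sub' (locallyLipschitz_snd' hG2) hL1).prodMk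
      (locallyLipschitz_add' (locallyLipschitz_neg' (locallyLipschitz_fst' hG1)) hL2))
  -- the two solutions
  set f : ℝ → W := fun t => ((q t, p t), (x t, y t)) with hfdef
  set g : ℝ → W := fun t => ((x t, y t), (q t, p t)) with hgdef
  have hf' : ∀ t ∈ Set.Ioo a b, HasDerivAt f (F (f t)) t := by
    intro t ht
    exact ((hq t ht).prodMk (hp t ht)).prodMk ((hx t ht).prodMk (hy t ht))
  have hg' : ∀ t ∈ Set.Ioo a b, HasDerivAt g (F (g t)) t := by
    intro t ht
    have h := ((hx t ht).prodMk (hy t ht)).prodMk ((hq t ht).prodMk (hp t ht))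
    have e1 : ω • (y t - p t) = -(ω • (p t - y t)) := by rw [← smul_neg, neg_sub]
    have e2 : ω • (x t - q t) = -(ω • (q t - x t)) := by rw [← smul_neg, neg_sub]
    have heq : F (g t) =
        ((gradP H (q t, y t) - ω • (p t - y t), -gradQ H (x t, p t) + ω • (q t - x t)),
         (gradP H (x t, p t) + ω • (p t - y t), -gradQ H (q t, y t) - ω • (q t - x t))) := by
      simp only [hF, hgdef, e1, e2, sub_neg_eq_add, ← sub_eq_add_neg]
    rw [heq]
    exact h
  have heq0 : f t₀ = g t₀ := by
    simp only [hfdef, hgdef, hq0, hp0, hx0, hy0]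
  -- connectedness argument
  haveI : PreconnectedSpace (Set.Ioo a b) := Subtype.preconnectedSpace isPreconnected_Ioo
  set S : Set (Set.Ioo a b) := {t | f t.1 = g t.1} with hSdef
  have hfc : ∀ t ∈ Set.Ioo a b, ContinuousAt f t := fun t ht => (hf' t ht).continuousAt
  have hgc : ∀ t ∈ Set.Ioo a b, ContinuousAt g t := fun t ht => (hg' t ht).continuousAt
  have hS_closed : IsClosed S := by
    apply isClosed_eq
    · exact continuousOn_iff_continuous_restrict.mp
        (fun t ht => (hfc t ht).continuousWithinAt)
    · exact continuousOn_iff_continuous_restrict.mp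
        (fun t ht => (hgc t ht).continuousWithinAt)
  have hS_open : IsOpen S := by
    rw [isOpen_iff_mem_nhds]
    rintro ⟨t₁, ht₁⟩ (hts : f t₁ = g t₁)
    obtain ⟨K, u, hu, hKu⟩ := hFl (f t₁)
    have hI : ∀ᶠ t in nhds t₁, t ∈ Set.Ioo a b :=
      Filter.eventually_of_mem (isOpen_Ioo.mem_nhds ht₁) (fun _ h => h)
    have hfu : ∀ᶠ t in nhds t₁, f t ∈ u := (hfc t₁ ht₁).preimage_mem_nhds hu
    have hgu : ∀ᶠ t in nhds t₁, g t ∈ u := (hgc t₁ ht₁).preimage_mem_nhds (hts ▸ hu)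
    have hev : f =ᶠ[nhds t₁] g := by
      apply ODE_solution_unique_of_eventually (v := fun _ : ℝ => F) (s := fun _ => u)
        (Filter.Eventually.of_forall fun _ => hKu)
      · filter_upwards [hI, hfu] with t ht htu
        exact ⟨hf' t ht, htu⟩
      · filter_upwards [hI, hgu] with t ht htu
        exact ⟨hg' t ht, htu⟩
      · exact hts
    have hmem : {s : ℝ | f s = g s} ∈ nhds t₁ := hev
    show (Subtype.val : Set.Ioo a b → ℝ) ⁻¹' {s : ℝ | f s = g s} ∈
      nhds (⟨t₁, ht₁⟩ : Set.Ioo a b)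
    exact (continuous_subtype_val.continuousAt).preimage_mem_nhds hmem
  have hS_univ : S = Set.univ :=
    (IsClopen.eq_univ ⟨hS_closed, hS_open⟩ ⟨⟨t₀, ht₀⟩, heq0⟩)
  intro t ht
  have : f t = g t := by
    have := hS_univ ▸ Set.mem_univ (⟨t, ht⟩ : Set.Ioo a b)
    exact this
  exact ⟨congrArg (fun w : W => w.2.1) this, congrArg (fun w : W => w.2.2) this⟩
end

section
/- The map φ₃ of the augmented symplectic integrator is the exact time-δ flow of the Hamiltonian ωH_C where H_C(q,p,x,y) = ½(‖q−x‖² + ‖p−y‖²): that is, the solution of the Hamilton equations q' = ω(p−y), p' = −ω(q−x), x' = −ω(p−y), y' = ω(q−x) with initial value (q₀,p₀,x₀,y₀) at time δ equals φ₃(q₀,p₀,x₀,y₀) = ½((q₀+x₀, p₀+y₀) + R(δ)(q₀−x₀, p₀−y₀), (q₀+x₀, p₀+y₀) − R(δ)(q₀−x₀, p₀−y₀)), with R(δ) = [[cos(2ωδ)I, sin(2ωδ)I],[−sin(2ωδ)I, cos(2ωδ)I]]. -/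
private lemma const_of_deriv_zero {f : ℝ → ℝ} (h : ∀ t, HasDerivAt f 0 t) (a b : ℝ) :
    f a = f b :=
  is_const_of_deriv_eq_zero (fun t => (h t).differentiableAt) (fun t => (h t).deriv) a b

private lemma rot_scalar (ω δ : ℝ) (u v : ℝ → ℝ)
    (hu : ∀ t, HasDerivAt u (2 * ω * v t) t)
    (hv : ∀ t, HasDerivAt v (-(2 * ω * u t)) t) :
    u δ = Real.cos (2 * ω * δ) * u 0 + Real.sin (2 * ω * δ) * v 0 ∧
    v δ = -Real.sin (2 * ω * δ) * u 0 + Real.cos (2 * ω * δ) * v 0 := by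
  have hcos : ∀ t : ℝ, HasDerivAt (fun s => Real.cos (2 * ω * s))
      (-Real.sin (2 * ω * t) * (2 * ω)) t := by
    intro t
    simpa [Function.comp_def] using (Real.hasDerivAt_cos (2 * ω * t)).comp t
      ((hasDerivAt_id t).const_mul (2 * ω))
  have hsin : ∀ t : ℝ, HasDerivAt (fun s => Real.sin (2 * ω * s))
      (Real.cos (2 * ω * t) * (2 * ω)) t := by
    intro t
    simpa [Function.comp_def] using (Real.hasDerivAt_sin (2 * ω * t)).comp t
      ((hasDerivAt_id t).const_mul (2 * ω))
  have hA : ∀ t, HasDerivAt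
      (fun s => Real.cos (2 * ω * s) * u s - Real.sin (2 * ω * s) * v s) 0 t := by
    intro t
    have := ((hcos t).mul (hu t)).sub ((hsin t).mul (hv t))
    exact this.congr_deriv (by ring)
  have hB : ∀ t, HasDerivAt
      (fun s => Real.sin (2 * ω * s) * u s + Real.cos (2 * ω * s) * v s) 0 t := by
    intro t
    have := ((hsin t).mul (hu t)).add ((hcos t).mul (hv t))
    exact this.congr_deriv (by ring)
  have eA := const_of_deriv_zero hA δ 0
  have eB := const_of_deriv_zero hB δ 0
  simp only [mul_zero, Real.cos_zero, Real.sin_zero, one_mul, zero_mul, sub_zero,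
    zero_add] at eA eB
  have key := Real.sin_sq_add_cos_sq (2 * ω * δ)
  constructor
  · linear_combination Real.cos (2 * ω * δ) * eA + Real.sin (2 * ω * δ) * eB - u δ * key
  · linear_combination (-Real.sin (2 * ω * δ)) * eA + Real.cos (2 * ω * δ) * eB - v δ * key

theorem phi3_is_exact_flow {n : ℕ} (ω δ : ℝ)
    (q p x y : ℝ → Fin n → ℝ) (q₀ p₀ x₀ y₀ : Fin n → ℝ)
    (hq : ∀ t, HasDerivAt q (ω • (p t - y t)) t)
    (hp : ∀ t, HasDerivAt p (-(ω • (q t - x t))) t)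
    (hx : ∀ t, HasDerivAt x (-(ω • (p t - y t))) t)
    (hy : ∀ t, HasDerivAt y (ω • (q t - x t)) t)
    (hq0 : q 0 = q₀) (hp0 : p 0 = p₀) (hx0 : x 0 = x₀) (hy0 : y 0 = y₀) :
    q δ = (1 / 2 : ℝ) • ((q₀ + x₀) + (Rrot ω δ (q₀ - x₀, p₀ - y₀)).1) ∧
    p δ = (1 / 2 : ℝ) • ((p₀ + y₀) + (Rrot ω δ (q₀ - x₀, p₀ - y₀)).2) ∧
    x δ = (1 / 2 : ℝ) • ((q₀ + x₀) - (Rrot ω δ (q₀ - x₀, p₀ - y₀)).1) ∧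
    y δ = (1 / 2 : ℝ) • ((p₀ + y₀) - (Rrot ω δ (q₀ - x₀, p₀ - y₀)).2) := by
  subst hq0 hp0 hx0 hy0
  -- componentwise derivatives
  have hq' : ∀ t, ∀ i, HasDerivAt (fun s => q s i) (ω * (p t i - y t i)) t := by
    intro t i; simpa using hasDerivAt_pi.1 (hq t) i
  have hp' : ∀ t, ∀ i, HasDerivAt (fun s => p s i) (-(ω * (q t i - x t i))) t := by
    intro t i; simpa using hasDerivAt_pi.1 (hp t) i
  have hx' : ∀ t, ∀ i, HasDerivAt (fun s => x s i) (-(ω * (p t i - y t i))) t := by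
    intro t i; simpa using hasDerivAt_pi.1 (hx t) i
  have hy' : ∀ t, ∀ i, HasDerivAt (fun s => y s i) (ω * (q t i - x t i)) t := by
    intro t i; simpa using hasDerivAt_pi.1 (hy t) i
  have main : ∀ i : Fin n,
      q δ i = Real.cos (2*ω*δ) * (q 0 i - x 0 i) + Real.sin (2*ω*δ) * (p 0 i - y 0 i)
        + (q 0 i + x 0 i) - q δ i ∧
      p δ i = -Real.sin (2*ω*δ) * (q 0 i - x 0 i) + Real.cos (2*ω*δ) * (p 0 i - y 0 i)
        + (p 0 i + y 0 i) - p δ i ∧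
      x δ i = (q 0 i + x 0 i) - q δ i ∧
      y δ i = (p 0 i + y 0 i) - p δ i := by
    intro i
    -- constants
    have hs : ∀ t, HasDerivAt (fun s => q s i + x s i) 0 t := by
      intro t
      have := (hq' t i).add (hx' t i)
      simpa [Pi.add_def] using this
    have hr : ∀ t, HasDerivAt (fun s => p s i + y s i) 0 t := by
      intro t
      have := (hp' t i).add (hy' t i)
      simpa [Pi.add_def] using this
    have es : q δ i + x δ i = q 0 i + x 0 i := const_of_deriv_zero hs δ 0
    have er : p δ i + y δ i = p 0 i + y 0 i := const_of_deriv_zero hr δ 0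
    -- rotation
    have hu : ∀ t, HasDerivAt (fun s => q s i - x s i) (2 * ω * (p t i - y t i)) t := by
      intro t
      have := (hq' t i).sub (hx' t i)
      exact this.congr_deriv (by ring)
    have hv : ∀ t, HasDerivAt (fun s => p s i - y s i) (-(2 * ω * (q t i - x t i))) t := by
      intro t
      have := (hp' t i).sub (hy' t i)
      exact this.congr_deriv (by ring)
    obtain ⟨e1, e2⟩ := rot_scalar ω δ _ _ hu hv
    refine ⟨by linarith, by linarith, by linarith, by linarith⟩
  refine ⟨funext fun i => ?_, funext fun i => ?_, funext fun i => ?_, funext fun i => ?_⟩ <;>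
  · obtain ⟨e1, e2, e3, e4⟩ := main i
    simp only [Rrot, Pi.smul_apply, Pi.add_apply, Pi.sub_apply, smul_eq_mul, Pi.neg_apply]
    linarith
end
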